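/- Monotonicity of the optimal lower split point (Lemma 3(a)): Let h ∈ H₂. For x ≥ 0, let (s₀(x), t₀(x)) be any maximizer of g_x(s,t) over D. Then x ↦ s₀(x) is decreasing: if 0 ≤ x < y and (s₀(x), t₀(x)), (s₀(y), t₀(y)) maximize g_x and g_y over D respectively, then h(s₀(y)) ≤ h(s₀(x)). -/

import Mathlib

open MeasureTheory Set

namespace NV

noncomputable section

/-- `hD h u`: the left derivative of `h` at `u` for `u ≠ 0`, and the right derivative at `0`. -/
def hD (h : ℝ → ℝ) (u : ℝ) : ℝ :=
  if u = 0 then derivWithin h (Set.Ioi (0 : ℝ)) 0 else derivWithin h (Set.Iio u) u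

/-- A distortion function: nondecreasing on `[0,1]` with `h 0 = 0`, `h 1 = 1`. -/
def IsDistortion (h : ℝ → ℝ) : Prop :=
  MonotoneOn h (Set.Icc (0 : ℝ) 1) ∧ h 0 = 0 ∧ h 1 = 1

/-- Membership in `H₂`: a convex distortion function with square-integrable derivative. -/
def MemH2 (h : ℝ → ℝ) : Prop :=
  IsDistortion h ∧ ConvexOn ℝ (Set.Icc (0 : ℝ) 1) h ∧
    IntegrableOn (fun u => (hD h u) ^ 2) (Set.Ioo (0 : ℝ) 1)

/-- Value-at-risk of `X` at level `α` under `P`. -/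
def VaR {Ω : Type*} [MeasurableSpace Ω] (P : Measure Ω) (X : Ω → ℝ) (α : ℝ) : ℝ :=
  sInf {t : ℝ | α ≤ (P {ω | X ω ≤ t}).toReal}

/-- Distortion functional `ρ_h(X) = ∫₀¹ VaR_u(X) h'(u) du`. -/
def rho {Ω : Type*} [MeasurableSpace Ω] (h : ℝ → ℝ) (P : Measure Ω) (X : Ω → ℝ) : ℝ :=
  ∫ u in Set.Ioo (0 : ℝ) 1, VaR P X u * hD h u

/-- Loss of ordering `x`: `ψ(x,p,c) = p·max{−S,−x} + c·x`, as a function of demand `s`. -/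
def loss (p c x s : ℝ) : ℝ := p * max (-s) (-x) + c * x

/-- Distributions on `[0,∞)` with mean `μ` and second moment `μ² + σ²`. -/
def momentSet (μ σ : ℝ) : Set (Measure ℝ) :=
  {P | IsProbabilityMeasure P ∧ P (Set.Iio (0 : ℝ)) = 0 ∧
      (∫ s, s ∂P) = μ ∧ (∫ s, s ^ 2 ∂P) = μ ^ 2 + σ ^ 2}

/-- Inner worst-case risk `sup_{F ∈ S(μ,σ)} ρ_h^F(ψ(x,p,c))` at order quantity `x`. -/
def wcInner (h : ℝ → ℝ) (p c μ σ x : ℝ) : ℝ :=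
  sSup ((fun P => rho h P (loss p c x)) '' momentSet μ σ)

/-- Worst-case risk `ρ_h^wc(μ,σ) = inf_{x ≥ 0} sup_{F ∈ S(μ,σ)} ρ_h^F(ψ(x,p,c))`. -/
def wcRisk (h : ℝ → ℝ) (p c μ σ : ℝ) : ℝ :=
  sInf ((fun x => wcInner h p c μ σ x) '' Set.Ici (0 : ℝ))

/-- Generalized inverse `s* = h⁻¹(β)`. -/
def sstar (h : ℝ → ℝ) (β : ℝ) : ℝ := sInf {u ∈ Set.Icc (0 : ℝ) 1 | β ≤ h u}

/-- `Δ_{s,t} = sqrt(t ∫_s^t h'(u)² du − (h(t) − β)²)`. -/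
def Del (h : ℝ → ℝ) (β s t : ℝ) : ℝ :=
  Real.sqrt (t * (∫ u in Set.Ioc s t, (hD h u) ^ 2) - (h t - β) ^ 2)

/-- `σ_t = sqrt(t (μ² + σ²) − μ²)`. -/
def sigt (μ σ t : ℝ) : ℝ := Real.sqrt (t * (μ ^ 2 + σ ^ 2) - μ ^ 2)

/-- `h_s(u) = (h(u) − h(s))/(1 − h(s))` for `s < u ≤ 1`, and `0` otherwise. -/
def hsub (h : ℝ → ℝ) (s u : ℝ) : ℝ :=
  if s < u ∧ u ≤ 1 then (h u - h s) / (1 - h s) else 0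

/-- `k_{s,t}`. -/
def kst (h : ℝ → ℝ) (μ σ s t : ℝ) : ℝ :=
  sigt μ σ t /
    Real.sqrt (t * (∫ u in Set.Ioc (0 : ℝ) t, (hD (hsub h s) u) ^ 2) - (hsub h s t) ^ 2)

/-- `ℓ_{s,t}`. -/
def lst (h : ℝ → ℝ) (μ σ s t : ℝ) : ℝ :=
  -(μ / t) - kst h μ σ s t * hsub h s t / t

/-- The feasible region `D`. -/
def Dset (h : ℝ → ℝ) (μ σ : ℝ) : Set (ℝ × ℝ) :=
  {q | 0 ≤ q.1 ∧ q.1 ≤ q.2 ∧ q.2 ≤ 1 ∧ μ ^ 2 / (μ ^ 2 + σ ^ 2) ≤ q.2 ∧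
      kst h μ σ q.1 q.2 * hD (hsub h q.1) q.2 + lst h μ σ q.1 q.2 ≤ 0}

/-- `g_x(s,t)`. -/
def gfun (h : ℝ → ℝ) (μ σ x : ℝ) (q : ℝ × ℝ) : ℝ :=
  -(h q.1) * x - (μ / q.2) * (h q.2 - h q.1) +
    (sigt μ σ q.2 / q.2) *
      Real.sqrt (q.2 * (∫ u in Set.Ioc q.1 q.2, (hD h u) ^ 2) - (h q.2 - h q.1) ^ 2)

/-- `t*`: the largest `t ∈ [1/(1+r²),1]` satisfying the defining inequality. -/
def tstar (h : ℝ → ℝ) (β r : ℝ) : ℝ :=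
  sSup {t ∈ Set.Icc (1 / (1 + r ^ 2)) (1 : ℝ) |
    (1 + r ^ 2) * (t * hD h t - h t + β) ^ 2 -
      (∫ u in Set.Ioo (0 : ℝ) 1, (hD h u - h t + β) ^ 2) ≤ 0}

end

end NV

theorem le_of_forall_le_sub_mul {α : Type*} {S : Set α} {G a : α → ℝ} {x y : ℝ} (hxy : x < y)
    {qx qy : α} (hqx : qx ∈ S) (hqy : qy ∈ S)
    (hqxmax : ∀ q ∈ S, G q - x * a q ≤ G qx - x * a qx)
    (hqymax : ∀ q ∈ S, G q - y * a q ≤ G qy - y * a qy) :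
    a qy ≤ a qx := by
  have hx := hqxmax qy hqy
  have hy := hqymax qx hqx
  -- summing the two inequalities gives `(a qx - a qy) * (y - x) ≥ 0`
  nlinarith

theorem NV.gfun_eq_sub_mul (h : ℝ → ℝ) (μ σ x : ℝ) (q : ℝ × ℝ) :
    gfun h μ σ x q = gfun h μ σ 0 q - x * h q.1 := by
  simp only [gfun]
  ring

open NV MeasureTheory
theorem stmt9_general (μ σ : ℝ)
    (h : ℝ → ℝ)
    (x y : ℝ) (hxy : x < y)
    (qx qy : ℝ × ℝ)
    (hqxD : qx ∈ Dset h μ σ)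
    (hqxmax : ∀ q ∈ Dset h μ σ, gfun h μ σ x q ≤ gfun h μ σ x qx)
    (hqyD : qy ∈ Dset h μ σ)
    (hqymax : ∀ q ∈ Dset h μ σ, gfun h μ σ y q ≤ gfun h μ σ y qy) :
    h qy.1 ≤ h qx.1 := by
  simp only [gfun_eq_sub_mul h μ σ x, gfun_eq_sub_mul h μ σ y] at hqxmax hqymax
  exact le_of_forall_le_sub_mul (a := fun q => h q.1) hxy hqxD hqyD hqxmax hqymax

/-- Monotonicity of the optimal lower split point (Lemma 3(a)). -/
theorem stmt9 (p c μ σ : ℝ) (hc : 0 < c) (hcp : c < p) (hμ : 0 < μ) (hσ : 0 < σ)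
    (h : ℝ → ℝ) (hH2 : MemH2 h)
    (x y : ℝ) (hx : 0 ≤ x) (hxy : x < y)
    (qx qy : ℝ × ℝ)
    (hqxD : qx ∈ Dset h μ σ)
    (hqxmax : ∀ q ∈ Dset h μ σ, gfun h μ σ x q ≤ gfun h μ σ x qx)
    (hqyD : qy ∈ Dset h μ σ)
    (hqymax : ∀ q ∈ Dset h μ σ, gfun h μ σ y q ≤ gfun h μ σ y qy) :
    h qy.1 ≤ h qx.1 :=
  stmt9_general μ σ h x y hxy qx qy hqxD hqxmax hqyD hqymax
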